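/- Let p be a prime and n ≥ 1. Then c_{p^n}(H(ℤ_p), H(ℚ_p)) = p^{2n}(1 − p^{−2}) = p^{2n} − p^{2n−2}; moreover c_m(H(ℤ_p), H(ℚ_p)) = 0 if m > 1 is not a power of p. -/

import Mathlib

section CommensurizerDefs

variable {G : Type*} [Group G]

/-- The conjugate subgroup `A ^ g = g⁻¹ A g`. -/
def conjSubgroup (g : G) (A : Subgroup G) : Subgroup G :=
  A.map (MulAut.conj g⁻¹).toMonoidHom

/-- `χ_{A,G}(g) = [A : A ∩ A^g]` (`0` if the index is infinite). -/
noncomputable def commIndex (A : Subgroup G) (g : G) : ℕ :=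
  (conjSubgroup g A).relIndex A

/-- `g` commensurates `A` if `A ∩ A^g` has finite index in both `A` and `A^g`. -/
def Commensurates (A : Subgroup G) (g : G) : Prop :=
  (conjSubgroup g A).relIndex A ≠ 0 ∧ A.relIndex (conjSubgroup g A) ≠ 0

/-- `Comm_n(A, G)`. -/
def commSet (A : Subgroup G) (n : ℕ) : Set G :=
  {g : G | Commensurates A g ∧ commIndex A g = n}

/-- The orbits of the left multiplication action of the normalizer `N_G(A)`
on `Comm_n(A, G)`. -/
def commOrbits (A : Subgroup G) (n : ℕ) : Set (Set G) :=
  {s : Set G | ∃ g ∈ commSet A n, s = (fun x => x * g) '' (Subgroup.normalizer (A : Set G) : Set G)}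

/-- `c_n(A, G) = |N_G(A) \ Comm_n(A, G)|`. -/
noncomputable def cCount (A : Subgroup G) (n : ℕ) : ℕ :=
  Nat.card ↥(commOrbits A n)

end CommensurizerDefs

/-- The Heisenberg group over a commutative ring `R`: the group of upper unitriangular
`3 × 3` matrices `[[1, a, c], [0, 1, b], [0, 0, 1]]`, recorded by the triple `(a, b, c)`
of its above-diagonal entries. -/
@[ext]
structure Heisenberg (R : Type*) where
  a : R
  b : R
  c : R

namespace Heisenberg

variable {R : Type*} [CommRing R]

instance : Mul (Heisenberg R) := ⟨fun x y => ⟨x.a + y.a, x.b + y.b, x.c + y.c + x.a * y.b⟩⟩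
instance : One (Heisenberg R) := ⟨⟨0, 0, 0⟩⟩
instance : Inv (Heisenberg R) := ⟨fun x => ⟨-x.a, -x.b, x.a * x.b - x.c⟩⟩

@[simp] theorem mul_a (x y : Heisenberg R) : (x * y).a = x.a + y.a := rfl
@[simp] theorem mul_b (x y : Heisenberg R) : (x * y).b = x.b + y.b := rfl
@[simp] theorem mul_c (x y : Heisenberg R) : (x * y).c = x.c + y.c + x.a * y.b := rfl
@[simp] theorem one_a : (1 : Heisenberg R).a = 0 := rfl
@[simp] theorem one_b : (1 : Heisenberg R).b = 0 := rfl
@[simp] theorem one_c : (1 : Heisenberg R).c = 0 := rfl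
@[simp] theorem inv_a (x : Heisenberg R) : x⁻¹.a = -x.a := rfl
@[simp] theorem inv_b (x : Heisenberg R) : x⁻¹.b = -x.b := rfl
@[simp] theorem inv_c (x : Heisenberg R) : x⁻¹.c = x.a * x.b - x.c := rfl

instance : Group (Heisenberg R) where
  mul_assoc x y z := by ext <;> simp <;> ring
  one_mul x := by ext <;> simp
  mul_one x := by ext <;> simp
  inv_mul_cancel x := by ext <;> simp [mul_comm]

/-- The group homomorphism `H(R) → H(S)` induced by a ring homomorphism `R → S`. -/
def map {S : Type*} [CommRing S] (f : R →+* S) : Heisenberg R →* Heisenberg S where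
  toFun x := ⟨f x.a, f x.b, f x.c⟩
  map_one' := by ext <;> simp
  map_mul' x y := by ext <;> simp

end Heisenberg

/-- `H(ℤ_p)` as a subgroup of `H(ℚ_p)`. -/
noncomputable def heisenbergInt (p : ℕ) [Fact p.Prime] : Subgroup (Heisenberg ℚ_[p]) :=
  (Heisenberg.map (PadicInt.Coe.ringHom (p := p))).range

/-!
Conjugation by `g` fixes the entries `a, b` of `x` and shifts `c` by `g.a x.b - g.b x.a`. Hence
`N(H(ℤ_p))` consists of the `g` with `g.a, g.b ∈ ℤ_p`, its orbits are indexed by the pair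
`(g.a, g.b) ∈ (ℚ_p/ℤ_p)²`, and `[H(ℤ_p) : H(ℤ_p) ∩ H(ℤ_p)^g]` is the size of the image of
`x ↦ g.a x.b - g.b x.a` in `ℚ_p/ℤ_p`, which is the order `p^k` of that pair. Counting the elements
of order exactly `p^n` in `(ℚ_p/ℤ_p)²` gives `p^{2n} - p^{2n-2}`.
-/

section Commensurator

variable {G : Type*} [Group G]

theorem mem_conjSubgroup {A : Subgroup G} {g x : G} :
    x ∈ conjSubgroup g A ↔ g * x * g⁻¹ ∈ A := by
  rw [conjSubgroup, Subgroup.mem_map_equiv]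
  simp [MulAut.conj]

theorem relIndex_conjSubgroup (A : Subgroup G) (g : G) :
    A.relIndex (conjSubgroup g A) = commIndex A g⁻¹ := by
  have hcomap : A.comap (MulAut.conj g⁻¹).toMonoidHom = conjSubgroup g⁻¹ A := by
    ext x
    simp [mem_conjSubgroup]
  rw [commIndex, ← hcomap, Subgroup.relIndex_comap]
  rfl

theorem commensurates_iff {A : Subgroup G} {g : G} :
    Commensurates A g ↔ commIndex A g ≠ 0 ∧ commIndex A g⁻¹ ≠ 0 := by
  rw [Commensurates, relIndex_conjSubgroup]
  rfl

theorem cCount_eq_card_image {X : Type*} (A : Subgroup G) (n : ℕ) (φ : G → X)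
    (hφ : ∀ x y, x * y⁻¹ ∈ Subgroup.normalizer (A : Set G) ↔ φ x = φ y) :
    cCount A n = Nat.card (φ '' commSet A n) := by
  have horbit : ∀ g,
      (fun x => x * g) '' (Subgroup.normalizer (A : Set G) : Set G) = φ ⁻¹' {φ g} := by
    intro g
    ext x
    simp only [Set.mem_image, SetLike.mem_coe, Set.mem_preimage, Set.mem_singleton_iff, ← hφ]
    exact ⟨by rintro ⟨h, hh, rfl⟩; simpa using hh, fun hx => ⟨x * g⁻¹, hx, by simp⟩⟩
  have hOrbits : commOrbits A n = (fun u => φ ⁻¹' {u}) '' (φ '' commSet A n) := by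
    rw [Set.image_image]
    ext s
    simp [commOrbits, horbit, eq_comm]
  rw [cCount, hOrbits, Nat.card_coe_set_eq, Set.InjOn.ncard_image, Nat.card_coe_set_eq]
  rintro _ ⟨x, -, rfl⟩ _ ⟨y, -, rfl⟩ hxy
  simpa using Set.ext_iff.mp hxy x

end Commensurator

theorem Padic.norm_p_pow_inv {p : ℕ} [Fact p.Prime] (k : ℕ) :
    ‖((p : ℚ_[p]) ^ k)⁻¹‖ = (p : ℝ) ^ k := by
  rw [norm_inv, norm_pow, Padic.norm_p, inv_pow, inv_inv]

theorem Padic.pow_succ_le_norm_of_pow_lt_norm {p : ℕ} [Fact p.Prime] {x : ℚ_[p]} {k : ℕ}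
    (h : (p : ℝ) ^ k < ‖x‖) : (p : ℝ) ^ (k + 1) ≤ ‖x‖ := by
  have := (Padic.norm_le_pow_iff_norm_lt_pow_add_one x k).not.mp h.not_ge
  exact_mod_cast not_lt.mp this

theorem PadicInt.exists_mem_subring_mul_eq {p : ℕ} [Fact p.Prime] {c r : ℚ_[p]}
    (h : ‖r‖ ≤ ‖c‖) :
    ∃ t ∈ PadicInt.subring p, c * t = r := by
  rcases eq_or_ne c 0 with rfl | hc
  · rw [norm_zero, norm_le_zero_iff] at h
    exact ⟨0, zero_mem _, by rw [h, mul_zero]⟩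
  · refine ⟨r / c, ?_, mul_div_cancel₀ r hc⟩
    rw [PadicInt.mem_subring_iff, norm_div]
    exact div_le_one_of_le₀ h (norm_nonneg c)

abbrev PadicFrac (p : ℕ) [Fact p.Prime] := ℚ_[p] ⧸ (PadicInt.subring p).toAddSubgroup

namespace PadicFrac

variable {p : ℕ} [hp : Fact p.Prime]

theorem coe_eq_zero_iff {r : ℚ_[p]} : (r : PadicFrac p) = 0 ↔ ‖r‖ ≤ 1 :=
  QuotientAddGroup.eq_zero_iff r

theorem coe_eq_coe_iff {r s : ℚ_[p]} : (r : PadicFrac p) = s ↔ ‖r - s‖ ≤ 1 :=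
  QuotientAddGroup.eq_iff_sub_mem

variable (p) in
noncomputable def scale (k : ℕ) : ℤ_[p] →+ PadicFrac p :=
  (QuotientAddGroup.mk' _).comp
    ((AddMonoidHom.mulLeft ((p : ℚ_[p]) ^ k)⁻¹).comp PadicInt.Coe.ringHom.toAddMonoidHom)

theorem scale_apply (k : ℕ) (t : ℤ_[p]) : scale p k t = (((p : ℚ_[p]) ^ k)⁻¹ * t : ℚ_[p]) := rfl

variable (p) in
/-- `p^{-k} ℤ_p / ℤ_p`, the `p^k`-torsion subgroup of `ℚ_p / ℤ_p`. -/
noncomputable def torsion (k : ℕ) : AddSubgroup (PadicFrac p) := (scale p k).range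

theorem ker_scale (k : ℕ) : (scale p k).ker = (PadicInt.toZModPow k).toAddMonoidHom.ker := by
  ext t
  have hpk : (0 : ℝ) < (p : ℝ) ^ k := pow_pos (mod_cast hp.out.pos) k
  rw [AddMonoidHom.mem_ker, scale_apply, coe_eq_zero_iff, norm_mul, Padic.norm_p_pow_inv,
    PadicInt.padic_norm_e_of_padicInt, ← le_div_iff₀' hpk, one_div, ← zpow_natCast, ← zpow_neg,
    PadicInt.norm_le_pow_iff_mem_span_pow, ← PadicInt.ker_toZModPow]
  rfl

theorem card_torsion (k : ℕ) : Nat.card (torsion p k) = p ^ k := by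
  rw [torsion, ← Nat.card_congr (QuotientAddGroup.quotientKerEquivRange _).toEquiv, ker_scale,
    Nat.card_congr (QuotientAddGroup.quotientKerEquivOfSurjective _
      (ZMod.ringHom_surjective (PadicInt.toZModPow k))).toEquiv, Nat.card_zmod]

theorem coe_mem_torsion_iff {k : ℕ} {r : ℚ_[p]} :
    (r : PadicFrac p) ∈ torsion p k ↔ ‖r‖ ≤ p ^ k := by
  have hpk : (1 : ℝ) ≤ (p : ℝ) ^ k := one_le_pow₀ (mod_cast hp.out.one_le)
  constructor
  · rintro ⟨t, ht⟩
    rw [scale_apply, coe_eq_coe_iff] at ht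
    have ht' : ‖((p : ℚ_[p]) ^ k)⁻¹ * t‖ ≤ p ^ k := by
      rw [norm_mul, Padic.norm_p_pow_inv, PadicInt.padic_norm_e_of_padicInt]
      exact mul_le_of_le_one_right (by positivity) t.norm_le_one
    calc ‖r‖ = ‖((p : ℚ_[p]) ^ k)⁻¹ * t + (r - ((p : ℚ_[p]) ^ k)⁻¹ * t)‖ := by ring_nf
      _ ≤ max ‖((p : ℚ_[p]) ^ k)⁻¹ * t‖ ‖r - ((p : ℚ_[p]) ^ k)⁻¹ * t‖ :=
        IsUltrametricDist.norm_add_le_max _ _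
      _ ≤ p ^ k := max_le ht' ((norm_sub_rev _ _).trans_le (ht.trans hpk))
  · intro hr
    have hpk0 : (p : ℚ_[p]) ^ k ≠ 0 := pow_ne_zero k (mod_cast hp.out.ne_zero)
    have hint : ‖(p : ℚ_[p]) ^ k * r‖ ≤ 1 := by
      rw [norm_mul, ← inv_inv ((p : ℚ_[p]) ^ k), norm_inv, Padic.norm_p_pow_inv]
      exact inv_mul_le_one_of_le₀ hr (by positivity)
    refine ⟨⟨_, hint⟩, ?_⟩
    change ((((p : ℚ_[p]) ^ k)⁻¹ * ((p : ℚ_[p]) ^ k * r) : ℚ_[p]) : PadicFrac p) = r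
    rw [inv_mul_cancel_left₀ hpk0]

theorem torsion_mono : Monotone (torsion p) := by
  intro j k hjk u hu
  induction u using QuotientAddGroup.induction_on with | H r => ?_
  rw [coe_mem_torsion_iff] at hu ⊢
  exact hu.trans (pow_le_pow_right₀ (mod_cast hp.out.one_le) hjk)

theorem exists_mem_torsion (u : PadicFrac p) : ∃ k, u ∈ torsion p k := by
  induction u using QuotientAddGroup.induction_on with | H r => ?_
  obtain ⟨k, hk⟩ := pow_unbounded_of_one_lt ‖r‖ (mod_cast hp.out.one_lt : (1 : ℝ) < p)
  exact ⟨k, coe_mem_torsion_iff.mpr hk.le⟩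

/-- `p ^ level u` is the order of `u`. -/
noncomputable def level (u : PadicFrac p × PadicFrac p) : ℕ :=
  sInf {k | u ∈ (torsion p k).prod (torsion p k)}

theorem level_le_iff {u : PadicFrac p × PadicFrac p} {k : ℕ} :
    level u ≤ k ↔ u ∈ (torsion p k).prod (torsion p k) := by
  refine ⟨fun h => ?_, fun h => Nat.sInf_le h⟩
  have hne : {k | u ∈ (torsion p k).prod (torsion p k)}.Nonempty := by
    obtain ⟨i, hi⟩ := exists_mem_torsion u.1
    obtain ⟨j, hj⟩ := exists_mem_torsion u.2
    exact ⟨max i j, torsion_mono (le_max_left i j) hi, torsion_mono (le_max_right i j) hj⟩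
  have hmem := Nat.sInf_mem hne
  exact ⟨torsion_mono h hmem.1, torsion_mono h hmem.2⟩

theorem ncard_torsion_prod (k : ℕ) :
    ((torsion p k).prod (torsion p k) : Set (PadicFrac p × PadicFrac p)).ncard = p ^ (2 * k) := by
  rw [AddSubgroup.coe_prod, Set.ncard_prod, ← Nat.card_coe_set_eq, SetLike.coe_sort_coe,
    card_torsion, ← pow_add, two_mul]

theorem ncard_setOf_level_eq {n : ℕ} (hn : 1 ≤ n) :
    {u : PadicFrac p × PadicFrac p | level u = n}.ncard = p ^ (2 * n) - p ^ (2 * n - 2) := by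
  have hlevel : {u : PadicFrac p × PadicFrac p | level u = n} =
      ((torsion p n).prod (torsion p n) : Set (PadicFrac p × PadicFrac p)) \
        (torsion p (n - 1)).prod (torsion p (n - 1)) := by
    ext u
    simp only [Set.mem_ofPred_eq, Set.mem_sdiff, SetLike.mem_coe, ← level_le_iff]
    omega
  have hsub : ((torsion p (n - 1)).prod (torsion p (n - 1)) : Set (PadicFrac p × PadicFrac p)) ⊆
      (torsion p n).prod (torsion p n) := fun u => by
    simp only [SetLike.mem_coe, ← level_le_iff]
    omega
  have hfin := Set.finite_of_ncard_ne_zero (ncard_torsion_prod (p := p) (n - 1) ▸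
    pow_ne_zero _ hp.out.ne_zero)
  rw [hlevel, Set.ncard_sdiff hsub hfin, ncard_torsion_prod, ncard_torsion_prod, Nat.mul_sub_one]

end PadicFrac

theorem Heisenberg.mul_mul_inv {R : Type*} [CommRing R] (g x : Heisenberg R) :
    g * x * g⁻¹ = ⟨x.a, x.b, x.c + (g.a * x.b - g.b * x.a)⟩ := by
  ext <;> simp
  ring

section HeisenbergInt

open PadicFrac

variable {p : ℕ} [hp : Fact p.Prime]

theorem mem_heisenbergInt {x : Heisenberg ℚ_[p]} : x ∈ heisenbergInt p ↔
    x.a ∈ PadicInt.subring p ∧ x.b ∈ PadicInt.subring p ∧ x.c ∈ PadicInt.subring p := by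
  constructor
  · rintro ⟨y, rfl⟩
    exact ⟨y.a.2, y.b.2, y.c.2⟩
  · rintro ⟨ha, hb, hc⟩
    exact ⟨⟨⟨x.a, ha⟩, ⟨x.b, hb⟩, ⟨x.c, hc⟩⟩, rfl⟩

theorem conj_mem_heisenbergInt_iff {g x : Heisenberg ℚ_[p]} : g * x * g⁻¹ ∈ heisenbergInt p ↔
    x.a ∈ PadicInt.subring p ∧ x.b ∈ PadicInt.subring p ∧
      x.c + (g.a * x.b - g.b * x.a) ∈ PadicInt.subring p := by
  rw [Heisenberg.mul_mul_inv, mem_heisenbergInt]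

theorem mem_normalizer_heisenbergInt {h : Heisenberg ℚ_[p]} :
    h ∈ Subgroup.normalizer (heisenbergInt p : Set (Heisenberg ℚ_[p])) ↔
      h.a ∈ PadicInt.subring p ∧ h.b ∈ PadicInt.subring p := by
  rw [Subgroup.mem_normalizer_iff]
  constructor
  · intro hN
    have hx := (hN ⟨0, 1, 0⟩).mp (mem_heisenbergInt.mpr ⟨zero_mem _, one_mem _, zero_mem _⟩)
    have hy := (hN ⟨1, 0, 0⟩).mp (mem_heisenbergInt.mpr ⟨one_mem _, zero_mem _, zero_mem _⟩)
    rw [conj_mem_heisenbergInt_iff] at hx hy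
    simpa using And.intro hx.2.2 hy.2.2
  · rintro ⟨ha, hb⟩ x
    rw [conj_mem_heisenbergInt_iff, mem_heisenbergInt]
    refine and_congr_right fun hxa => and_congr_right fun hxb => ?_
    exact (add_mem_cancel_right (sub_mem (mul_mem ha hxb) (mul_mem hb hxa))).symm

variable (p) in
noncomputable def fracPair (g : Heisenberg ℚ_[p]) : PadicFrac p × PadicFrac p := (g.a, g.b)

theorem fracPair_surjective : Function.Surjective (fracPair p) := by
  rintro ⟨u, v⟩
  induction u using QuotientAddGroup.induction_on with | H r => ?_
  induction v using QuotientAddGroup.induction_on with | H s => ?_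
  exact ⟨⟨r, s, 0⟩, rfl⟩

theorem mul_inv_mem_normalizer_iff {x y : Heisenberg ℚ_[p]} :
    x * y⁻¹ ∈ Subgroup.normalizer (heisenbergInt p : Set (Heisenberg ℚ_[p])) ↔
      fracPair p x = fracPair p y := by
  simp [mem_normalizer_heisenbergInt, fracPair, QuotientAddGroup.eq_iff_sub_mem, sub_eq_add_neg]

theorem level_fracPair_le_iff {g : Heisenberg ℚ_[p]} {k : ℕ} :
    level (fracPair p g) ≤ k ↔ ‖g.a‖ ≤ p ^ k ∧ ‖g.b‖ ≤ p ^ k := by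
  rw [level_le_iff, AddSubgroup.mem_prod, fracPair, coe_mem_torsion_iff, coe_mem_torsion_iff]

theorem pow_level_le_norm {g : Heisenberg ℚ_[p]} (h : 0 < level (fracPair p g)) :
    (p : ℝ) ^ level (fracPair p g) ≤ ‖g.a‖ ∨ (p : ℝ) ^ level (fracPair p g) ≤ ‖g.b‖ := by
  obtain ⟨k, hk⟩ := Nat.exists_eq_add_of_lt h
  have hlt : ¬ level (fracPair p g) ≤ k := by omega
  rw [level_fracPair_le_iff, not_and_or, not_le, not_le] at hlt
  rw [hk, zero_add]
  exact hlt.imp Padic.pow_succ_le_norm_of_pow_lt_norm Padic.pow_succ_le_norm_of_pow_lt_norm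

variable (p) in
/-- The central entry `g.a x.b - g.b x.a` of `g x g⁻¹ x⁻¹`, modulo `ℤ_p`. -/
noncomputable def conjShift (g : Heisenberg ℚ_[p]) :
    heisenbergInt p →* Multiplicative (PadicFrac p) where
  toFun x := .ofAdd ((g.a * x.1.b - g.b * x.1.a : ℚ_[p]) : PadicFrac p)
  map_one' := by simp
  map_mul' x y := by
    rw [← ofAdd_add, ← QuotientAddGroup.mk_add]
    simp only [Subgroup.coe_mul, Heisenberg.mul_a, Heisenberg.mul_b]
    ring_nf

theorem ker_conjShift (g : Heisenberg ℚ_[p]) :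
    (conjShift p g).ker = (conjSubgroup g (heisenbergInt p)).subgroupOf (heisenbergInt p) := by
  ext x
  obtain ⟨ha, hb, hc⟩ := mem_heisenbergInt.mp x.2
  rw [MonoidHom.mem_ker, Subgroup.mem_subgroupOf, mem_conjSubgroup, conj_mem_heisenbergInt_iff,
    add_mem_cancel_left hc, and_iff_right ha, and_iff_right hb]
  exact ofAdd_eq_one.trans (QuotientAddGroup.eq_zero_iff _)

theorem mem_range_conjShift_iff {g : Heisenberg ℚ_[p]} {u : Multiplicative (PadicFrac p)} :
    u ∈ (conjShift p g).range ↔ u.toAdd ∈ torsion p (level (fracPair p g)) := by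
  set k := level (fracPair p g)
  obtain ⟨hga, hgb⟩ := level_fracPair_le_iff.mp (le_refl k)
  have hpk : (0 : ℝ) ≤ p ^ k := by positivity
  constructor
  · rintro ⟨x, rfl⟩
    obtain ⟨hxa, hxb, -⟩ := mem_heisenbergInt.mp x.2
    refine coe_mem_torsion_iff.mpr ?_
    rw [sub_eq_add_neg]
    refine (IsUltrametricDist.norm_add_le_max _ _).trans (max_le ?_ ?_)
    · rw [norm_mul]
      exact (mul_le_mul hga hxb (norm_nonneg _) hpk).trans_eq (mul_one _)
    · rw [norm_neg, norm_mul]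
      exact (mul_le_mul hgb hxa (norm_nonneg _) hpk).trans_eq (mul_one _)
  · obtain ⟨r, hr⟩ := QuotientAddGroup.mk_surjective u.toAdd
    rw [← hr, coe_mem_torsion_iff]
    intro hu
    obtain ⟨x, hx, hshift⟩ : ∃ x ∈ heisenbergInt p,
        ((g.a * x.b - g.b * x.a : ℚ_[p]) : PadicFrac p) = r := by
      rcases Nat.eq_zero_or_pos k with hk | hk
      · refine ⟨1, one_mem _, ?_⟩
        rw [hk, pow_zero, ← coe_eq_zero_iff] at hu
        simp [hu]
      rcases pow_level_le_norm hk with h | h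
      · obtain ⟨t, ht, rfl⟩ := PadicInt.exists_mem_subring_mul_eq (hu.trans h)
        exact ⟨⟨0, t, 0⟩, mem_heisenbergInt.mpr ⟨zero_mem _, ht, zero_mem _⟩, by simp⟩
      · obtain ⟨t, ht, rfl⟩ := PadicInt.exists_mem_subring_mul_eq (hu.trans h)
        exact ⟨⟨-t, 0, 0⟩, mem_heisenbergInt.mpr ⟨neg_mem ht, zero_mem _, zero_mem _⟩, by simp⟩
    exact ⟨⟨x, hx⟩, congrArg Multiplicative.ofAdd (hshift.trans hr)⟩

theorem commIndex_heisenbergInt (g : Heisenberg ℚ_[p]) :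
    commIndex (heisenbergInt p) g = p ^ level (fracPair p g) := by
  rw [commIndex, Subgroup.relIndex, ← ker_conjShift, Subgroup.index_ker, ← card_torsion]
  exact Nat.card_congr (Equiv.subtypeEquiv Multiplicative.toAdd fun _ => mem_range_conjShift_iff)

theorem commSet_heisenbergInt (m : ℕ) :
    commSet (heisenbergInt p) m = {g | p ^ level (fracPair p g) = m} := by
  ext g
  simp [commSet, commensurates_iff, commIndex_heisenbergInt, hp.out.ne_zero]

end HeisenbergInt

/-- **Local commensurizer growth of the Heisenberg group.** For every prime `p` and
`n ≥ 1`, `c_{p^n}(H(ℤ_p), H(ℚ_p)) = p^{2n}·(1 - p^{-2}) = p^{2n} - p^{2n-2}`; moreover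
`c_m(H(ℤ_p), H(ℚ_p)) = 0` whenever `m > 1` is not a power of `p`. -/
theorem heisenberg_local_cCount (p : ℕ) [Fact p.Prime] :
    (∀ n : ℕ, 1 ≤ n →
        cCount (heisenbergInt p) (p ^ n) = p ^ (2 * n) - p ^ (2 * n - 2)) ∧
      (∀ m : ℕ, 1 < m → (¬ ∃ k : ℕ, m = p ^ k) → cCount (heisenbergInt p) m = 0) := by
  have hcount (m : ℕ) := cCount_eq_card_image (heisenbergInt p) m (fracPair p)
    fun _ _ => mul_inv_mem_normalizer_iff
  refine ⟨fun n hn => ?_, fun m _ hm => ?_⟩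
  · have hset :
        commSet (heisenbergInt p) (p ^ n) = fracPair p ⁻¹' {u | PadicFrac.level u = n} := by
      ext g
      simp [commSet_heisenbergInt, (Nat.pow_right_injective (Fact.out : p.Prime).two_le).eq_iff]
    rw [hcount, hset, Set.image_preimage_eq _ fracPair_surjective, Nat.card_coe_set_eq,
      PadicFrac.ncard_setOf_level_eq hn]
  · have hset : commSet (heisenbergInt p) m = ∅ := by
      rw [commSet_heisenbergInt, Set.eq_empty_iff_forall_notMem]
      exact fun g hg => hm ⟨_, hg.symm⟩
    rw [hcount, hset, Set.image_empty, Nat.card_coe_set_eq, Set.ncard_empty]
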